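/- Let S be a standard Borel space. Let M' := {(μ₁, μ₂) ∈ M(S) × M(S) : |μ₁ − μ₂|(S) = μ₁(S) + μ₂(S)}. Then M' is a measurable subset of M(S) × M(S), and the Jordan decomposition map ψ : μ ↦ (μ⁺, μ⁻) is a measurable bijection from M±(S) onto M' whose inverse (μ₁, μ₂) ↦ μ₁ − μ₂ is also measurable. -/

import Mathlib

open MeasureTheory

/-- The σ-algebra on the space `M±(S)` of finite signed measures on `S`,
generated by the evaluation maps `μ ↦ μ B` over measurable sets `B`. -/
instance signedMeasureMeasurableSpace (S : Type*) [MeasurableSpace S] :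
    MeasurableSpace (SignedMeasure S) :=
  ⨆ (B : Set S) (_ : MeasurableSet B),
    MeasurableSpace.comap (fun μ : SignedMeasure S => μ B) inferInstance

/-- A finite (nonnegative) measure regarded as a finite signed measure. -/
noncomputable def toSigned {S : Type*} [MeasurableSpace S]
    (μ : {μ : Measure S // IsFiniteMeasure μ}) : SignedMeasure S :=
  @Measure.toSignedMeasure S _ μ.1 μ.2

/-- The Jordan decomposition map `ψ : μ ↦ (μ⁺, μ⁻)` from `M±(S)` to `M(S) × M(S)`. -/
noncomputable def jordanPair {S : Type*} [MeasurableSpace S] (μ : SignedMeasure S) :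
    {μ : Measure S // IsFiniteMeasure μ} × {μ : Measure S // IsFiniteMeasure μ} :=
  (⟨μ.toJordanDecomposition.posPart, inferInstance⟩,
   ⟨μ.toJordanDecomposition.negPart, inferInstance⟩)

/-!
The σ-algebra on `M±(S)` is generated by the evaluations, so measurability of `ψ` reduces to that
of `s ↦ s⁺(B)`. If `P` is a Hahn positive set of `s`, then `s⁺(B) = s(P ∩ B)`; approximating
`P ∩ B` in `|s|`-measure by sets of a countable algebra `𝒜` generating the σ-algebra of `S` (one
exists because `S` is standard Borel) gives `s⁺(B) = ⨆ A ∈ 𝒜, s(A ∩ B)⁺`, a countable supremum of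
measurable functions of `s`.

If `s = μ₁ - μ₂`, then `s⁺ ≤ μ₁` and `s⁻ ≤ μ₂`; the condition `|s|(S) = μ₁(S) + μ₂(S)` forces
both inequalities to be equalities, which identifies the range of `ψ`.
-/

open Set
open scoped symmDiff

namespace MeasureTheory.SignedMeasure

variable {S : Type*} [MeasurableSpace S]

theorem measurable_apply {B : Set S} (hB : MeasurableSet B) :
    Measurable fun μ : SignedMeasure S => μ B :=
  Measurable.of_comap_le <| le_iSup₂ (f := fun (B : Set S) (_ : MeasurableSet B) =>
    MeasurableSpace.comap (fun μ : SignedMeasure S => μ B) inferInstance) B hB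

theorem measurable_of_measurable_apply {X : Type*} [MeasurableSpace X] {f : X → SignedMeasure S}
    (hf : ∀ B, MeasurableSet B → Measurable fun x => f x B) : Measurable f := by
  refine measurable_iff_comap_le.2 ?_
  simp only [signedMeasureMeasurableSpace, MeasurableSpace.comap_iSup, iSup_le_iff,
    MeasurableSpace.comap_comp]
  exact fun B hB => (hf B hB).comap_le

instance : MeasurableNeg (SignedMeasure S) :=
  ⟨measurable_of_measurable_apply fun _ hB => (measurable_apply hB).neg⟩

theorem ofReal_apply_le_posPart (s : SignedMeasure S) {A : Set S} (hA : MeasurableSet A) :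
    ENNReal.ofReal (s A) ≤ s.toJordanDecomposition.posPart A := by
  refine ENNReal.ofReal_le_of_le_toReal ?_
  rw [s.apply_eq_posPart_real_sub_negPart_real hA]
  exact sub_le_self _ measureReal_nonneg

theorem exists_posPart_apply_eq_ofReal_inter (s : SignedMeasure S) :
    ∃ P, MeasurableSet P ∧ ∀ A, MeasurableSet A →
      s.toJordanDecomposition.posPart A = ENNReal.ofReal (s (P ∩ A)) := by
  obtain ⟨P, hP, hPpos, -, hpos, -⟩ := s.toJordanDecomposition_spec
  refine ⟨P, hP, fun A hA => ?_⟩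
  rw [hpos, toMeasureOfZeroLE_apply _ hPpos hP hA, ENNReal.ofReal_eq_coe_nnreal]

theorem posPart_le_of_ofReal_apply_le (s : SignedMeasure S) {μ : Measure S}
    (h : ∀ A, MeasurableSet A → ENNReal.ofReal (s A) ≤ μ A) :
    s.toJordanDecomposition.posPart ≤ μ := by
  obtain ⟨P, hP, hposP⟩ := s.exists_posPart_apply_eq_ofReal_inter
  refine Measure.le_iff.2 fun A hA => ?_
  rw [hposP A hA]
  exact (h _ (hP.inter hA)).trans (measure_mono inter_subset_right)

theorem posPart_le_of_eq_sub {s : SignedMeasure S} {μ ν : Measure S} [IsFiniteMeasure μ]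
    [IsFiniteMeasure ν] (h : s = μ.toSignedMeasure - ν.toSignedMeasure) :
    s.toJordanDecomposition.posPart ≤ μ :=
  s.posPart_le_of_ofReal_apply_le fun A hA => by
    rw [h, Measure.toSignedMeasure_sub_apply hA]
    exact ENNReal.ofReal_le_of_le_toReal (sub_le_self _ measureReal_nonneg)

theorem negPart_le_of_eq_sub {s : SignedMeasure S} {μ ν : Measure S} [IsFiniteMeasure μ]
    [IsFiniteMeasure ν] (h : s = μ.toSignedMeasure - ν.toSignedMeasure) :
    s.toJordanDecomposition.negPart ≤ ν := by
  simpa [toJordanDecomposition_neg] using posPart_le_of_eq_sub (s := -s) (by rw [h, neg_sub])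

theorem abs_apply_sub_apply_le_totalVariation_symmDiff (s : SignedMeasure S) {A B : Set S}
    (hA : MeasurableSet A) (hB : MeasurableSet B) :
    |s A - s B| ≤ s.totalVariation.real (A ∆ B) := by
  have hsplit : ∀ {C D : Set S}, MeasurableSet C → MeasurableSet D →
      s C = s (C ∩ D) + s (C \ D) := fun hC hD => by
    rw [← VectorMeasure.of_add_of_sdiff (hC.inter hD) hC inter_subset_left, sdiff_self_inter]
  have hA' := hsplit hA hB
  have hB' := hsplit hB hA
  rw [inter_comm] at hB'
  calc |s A - s B| = |s (A \ B) - s (B \ A)| := by rw [hA', hB']; ring_nf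
    _ ≤ ‖s (A \ B)‖ + ‖s (B \ A)‖ := abs_sub _ _
    _ ≤ s.totalVariation.real (A \ B) + s.totalVariation.real (B \ A) :=
      add_le_add (s.norm_le_totalVariation _) (s.norm_le_totalVariation _)
    _ = s.totalVariation.real (A ∆ B) :=
      (measureReal_union disjoint_sdiff_sdiff (hB.diff hA)).symm

theorem posPart_apply_eq_biSup {𝒜 : Set (Set S)} (h𝒜 : IsSetAlgebra 𝒜)
    (hgen : ‹MeasurableSpace S› = MeasurableSpace.generateFrom 𝒜) (s : SignedMeasure S)
    {B : Set S} (hB : MeasurableSet B) :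
    s.toJordanDecomposition.posPart B = ⨆ A ∈ 𝒜, ENNReal.ofReal (s (A ∩ B)) := by
  have hdense := Measure.MeasureDense.of_generateFrom_isSetAlgebra_finite s.totalVariation h𝒜 hgen
  refine le_antisymm ?_ (iSup₂_le fun A hA => ?_)
  · obtain ⟨P, hP, hposP⟩ := s.exists_posPart_apply_eq_ofReal_inter
    rw [hposP B hB]
    refine ENNReal.le_of_forall_pos_le_add fun ε hε _ => ?_
    obtain ⟨A, hA, hAε⟩ := hdense.approx (P ∩ B) (hP.inter hB) (measure_ne_top _ _) ε hε
    have hAm := hdense.measurable A hA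
    have hsub : (P ∩ B) ∆ (A ∩ B) ⊆ (P ∩ B) ∆ A := calc
      _ = (P ∩ B) ∆ A ∩ B := by rw [inter_symmDiff_distrib_right, inter_assoc, inter_self]
      _ ⊆ _ := inter_subset_left
    have hclose : s (P ∩ B) ≤ s (A ∩ B) + ε := by
      have := (abs_le.1 <| s.abs_apply_sub_apply_le_totalVariation_symmDiff
        (hP.inter hB) (hAm.inter hB)).2
      have := measureReal_mono hsub (μ := s.totalVariation)
      have := (ENNReal.lt_ofReal_iff_toReal_lt (measure_ne_top _ _)).1 hAε
      simp only [measureReal_def] at *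
      linarith
    calc ENNReal.ofReal (s (P ∩ B)) ≤ ENNReal.ofReal (s (A ∩ B)) + ε := by
          simpa using (ENNReal.ofReal_le_ofReal hclose).trans ENNReal.ofReal_add_le
      _ ≤ _ := by gcongr; exact le_iSup₂ (f := fun A _ => ENNReal.ofReal (s (A ∩ B))) A hA
  · exact (s.ofReal_apply_le_posPart ((hdense.measurable A hA).inter hB)).trans
      (measure_mono inter_subset_right)

variable [MeasurableSpace.CountablyGenerated S]

theorem measurable_posPart_apply {B : Set S} (hB : MeasurableSet B) :
    Measurable fun s : SignedMeasure S => s.toJordanDecomposition.posPart B := by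
  obtain ⟨b, hb, hgen⟩ := MeasurableSpace.CountablyGenerated.isCountablyGenerated (α := S)
  have hgen' := hgen.trans (generateFrom_generateSetAlgebra_eq (𝒜 := b)).symm
  simp_rw [posPart_apply_eq_biSup isSetAlgebra_generateSetAlgebra hgen' _ hB]
  refine Measurable.biSup _ (countable_generateSetAlgebra hb) fun A hA => ?_
  have hAm : MeasurableSet A := hgen' ▸ MeasurableSpace.measurableSet_generateFrom hA
  exact ENNReal.measurable_ofReal.comp (measurable_apply (hAm.inter hB))

theorem measurable_negPart_apply {B : Set S} (hB : MeasurableSet B) :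
    Measurable fun s : SignedMeasure S => s.toJordanDecomposition.negPart B := by
  have hneg : (fun s : SignedMeasure S => s.toJordanDecomposition.negPart B) =
      (fun s => s.toJordanDecomposition.posPart B) ∘ Neg.neg := by
    ext1 s
    rw [Function.comp_apply, toJordanDecomposition_neg, JordanDecomposition.neg_posPart]
  rw [hneg]
  exact (measurable_posPart_apply hB).comp measurable_neg

end MeasureTheory.SignedMeasure

section JordanPair

variable {S : Type*} [MeasurableSpace S]

local notation "M₊" => {μ : Measure S // IsFiniteMeasure μ}

theorem measurable_subtype_apply {B : Set S} (hB : MeasurableSet B) :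
    Measurable fun μ : M₊ => μ.1 B :=
  (Measure.measurable_coe hB).comp measurable_subtype_coe

theorem toSigned_sub_apply (p : M₊ × M₊) {B : Set S} (hB : MeasurableSet B) :
    (toSigned p.1 - toSigned p.2) B = p.1.1.real B - p.2.1.real B :=
  have := p.1.2
  have := p.2.2
  Measure.toSignedMeasure_sub_apply hB

theorem measurable_toSigned_sub : Measurable fun p : M₊ × M₊ => toSigned p.1 - toSigned p.2 :=
  SignedMeasure.measurable_of_measurable_apply fun B hB => by
    simp_rw [toSigned_sub_apply _ hB, measureReal_def]
    exact ((measurable_subtype_apply hB).comp measurable_fst).ennreal_toReal.sub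
      ((measurable_subtype_apply hB).comp measurable_snd).ennreal_toReal

theorem toSigned_sub_jordanPair (μ : SignedMeasure S) :
    toSigned (jordanPair μ).1 - toSigned (jordanPair μ).2 = μ :=
  μ.toSignedMeasure_toJordanDecomposition

theorem jordanPair_injective : Function.Injective (jordanPair (S := S)) :=
  Function.LeftInverse.injective (g := fun p : M₊ × M₊ => toSigned p.1 - toSigned p.2)
    toSigned_sub_jordanPair

-- the set `M'` of the statement
variable (S) in
def jordanPairs : Set (M₊ × M₊) :=
  {p | (toSigned p.1 - toSigned p.2).totalVariation univ = p.1.1 univ + p.2.1 univ}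

theorem range_jordanPair : range (jordanPair (S := S)) = jordanPairs S := by
  ext p
  refine ⟨?_, fun hp => ?_⟩
  · rintro ⟨μ, rfl⟩
    rw [jordanPairs, mem_ofPred_eq, toSigned_sub_jordanPair]
    rfl
  have := p.1.2
  have := p.2.2
  set ν := toSigned p.1 - toSigned p.2 with hν
  have hpos := ν.posPart_le_of_eq_sub hν
  have hneg := ν.negPart_le_of_eq_sub hν
  replace hp : ν.toJordanDecomposition.posPart univ + ν.toJordanDecomposition.negPart univ =
      p.1.1 univ + p.2.1 univ := hp
  have huniv₁ : ν.toJordanDecomposition.posPart univ = p.1.1 univ :=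
    le_antisymm (hpos univ) <| ENNReal.le_of_add_le_add_right (measure_ne_top _ univ) <| calc
      p.1.1 univ + ν.toJordanDecomposition.negPart univ ≤ p.1.1 univ + p.2.1 univ := by
        gcongr
      _ = _ := hp.symm
  have huniv₂ : ν.toJordanDecomposition.negPart univ = p.2.1 univ :=
    le_antisymm (hneg univ) <| ENNReal.le_of_add_le_add_left (measure_ne_top _ univ) <| calc
      ν.toJordanDecomposition.posPart univ + p.2.1 univ ≤ p.1.1 univ + p.2.1 univ := by
        gcongr
      _ = _ := hp.symm
  have h₁ : ν.toJordanDecomposition.posPart = p.1.1 :=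
    Measure.eq_of_le_of_measure_univ_eq hpos huniv₁
  have h₂ : ν.toJordanDecomposition.negPart = p.2.1 :=
    Measure.eq_of_le_of_measure_univ_eq hneg huniv₂
  exact ⟨ν, Prod.ext (Subtype.ext h₁) (Subtype.ext h₂)⟩

variable [MeasurableSpace.CountablyGenerated S]

theorem measurable_jordanPair : Measurable (jordanPair (S := S)) :=
  ((Measure.measurable_of_measurable_coe _ fun _ hB =>
      SignedMeasure.measurable_posPart_apply hB).subtype_mk).prodMk
    (Measure.measurable_of_measurable_coe _ fun _ hB =>
      SignedMeasure.measurable_negPart_apply hB).subtype_mk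

theorem measurableSet_jordanPairs : MeasurableSet (jordanPairs S) :=
  measurableSet_eq_fun (((SignedMeasure.measurable_posPart_apply .univ).add
    (SignedMeasure.measurable_negPart_apply .univ)).comp measurable_toSigned_sub)
    (((measurable_subtype_apply .univ).comp measurable_fst).add
      ((measurable_subtype_apply .univ).comp measurable_snd))

end JordanPair

/-- let `S` be a standard Borel space and
`M' := {(μ₁, μ₂) ∈ M(S) × M(S) : |μ₁ − μ₂|(S) = μ₁(S) + μ₂(S)}`. Then `M'` is a
measurable subset of `M(S) × M(S)`, and the Jordan decomposition map
`ψ : μ ↦ (μ⁺, μ⁻)` is a measurable bijection from `M±(S)` onto `M'` whose inverse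
`(μ₁, μ₂) ↦ μ₁ − μ₂` is also measurable. -/
theorem jordan_bijection_measurable (S : Type*) [MeasurableSpace S]
    [StandardBorelSpace S] :
    MeasurableSet {p : {μ : Measure S // IsFiniteMeasure μ} ×
        {μ : Measure S // IsFiniteMeasure μ} |
        (toSigned p.1 - toSigned p.2).totalVariation Set.univ
          = p.1.1 Set.univ + p.2.1 Set.univ} ∧
    Measurable (jordanPair (S := S)) ∧
    Function.Injective (jordanPair (S := S)) ∧
    Set.range (jordanPair (S := S)) =
      {p : {μ : Measure S // IsFiniteMeasure μ} ×
        {μ : Measure S // IsFiniteMeasure μ} |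
        (toSigned p.1 - toSigned p.2).totalVariation Set.univ
          = p.1.1 Set.univ + p.2.1 Set.univ} ∧
    (∀ μ : SignedMeasure S,
      toSigned (jordanPair μ).1 - toSigned (jordanPair μ).2 = μ) ∧
    Measurable (fun p : {μ : Measure S // IsFiniteMeasure μ} ×
        {μ : Measure S // IsFiniteMeasure μ} => toSigned p.1 - toSigned p.2) :=
  ⟨measurableSet_jordanPairs, measurable_jordanPair, jordanPair_injective, range_jordanPair,
    toSigned_sub_jordanPair, measurable_toSigned_sub⟩
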